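/- Let Γ be a connected hairy graph. The assignment (ρ, a) ↦ (ρ \ {a}, a) is a bijection from the set of pairs (ρ, a), where ρ is a cycled forest of Γ and a is an edge of the unique cycle of ρ, to the set of pairs (τ, a), where τ is a spanning forest of Γ and a is an edge of Γ not in τ whose two endpoints lie in the same connected component of τ. -/

import Mathlib

/-!
Common definitions for the formalization of the graph complexes of
Andersson–Willwacher–Živković, *Oriented hairy graphs and moduli spaces of curves*.

We model graphs with labelled external legs (hairs) combinatorially, and we model
the various graph complexes as (abstract) cochain complexes of `ℚ`-vector spaces
together with a family of generators indexed by the combinatorial graphs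
satisfying the appropriate conditions.  The differentials and the combinatorially
defined maps between graph complexes are characterized by explicit equations on
the generators (sums over edge contractions, spanning forests, etc.); signs
coming from edge orientations are quantified existentially (values `±1`).
-/

noncomputable section

/-- A (finite, in applications) directed multigraph with external legs ("hairs")
labelled by the set `S`.  Internal vertices form the type `V`; each edge has a
source and a target in `V ⊕ S`. Edge directions are immaterial for the
"undirected" graph complexes. -/
structure HGraph (S : Type) where
  V : Type
  E : Type
  src : E → V ⊕ S
  tgt : E → V ⊕ S

namespace HGraph

variable {S T : Type} (G : HGraph S)

def IsFinite : Prop := Finite G.V ∧ Finite G.E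

/-- Undirected adjacency through an edge belonging to `T`. -/
def Adj (T : Set G.E) (x y : G.V ⊕ S) : Prop :=
  ∃ e ∈ T, (G.src e = x ∧ G.tgt e = y) ∨ (G.src e = y ∧ G.tgt e = x)

/-- Undirected reachability using only edges in `T`. -/
def Reach (T : Set G.E) : G.V ⊕ S → G.V ⊕ S → Prop :=
  Relation.ReflTransGen (G.Adj T)

def Connected : Prop := ∀ x y : G.V ⊕ S, G.Reach Set.univ x y

def outdeg (v : G.V) : ℕ := {e : G.E | G.src e = Sum.inl v}.ncard
def indeg (v : G.V) : ℕ := {e : G.E | G.tgt e = Sum.inl v}.ncard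
/-- the valence (total degree) of an internal vertex -/
def valence (v : G.V) : ℕ := G.outdeg v + G.indeg v

def hairValence (s : S) : ℕ :=
  {e : G.E | G.src e = Sum.inr s}.ncard + {e : G.E | G.tgt e = Sum.inr s}.ncard

/-- every external vertex is univalent -/
def IsHairy : Prop := ∀ s : S, G.hairValence s = 1

/-- every external vertex is the target of exactly one edge and the source of none -/
def HairsAreTargets : Prop :=
  ∀ s : S, {e : G.E | G.tgt e = Sum.inr s}.ncard = 1 ∧
    {e : G.E | G.src e = Sum.inr s}.ncard = 0

/-- The subgraph on all vertices with edge set `T` has no (undirected) cycles. -/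
def IsForestSub (T : Set G.E) : Prop :=
  ∀ e ∈ T, ¬ G.Reach (T \ {e}) (G.src e) (G.tgt e)

/-- A *spanning forest*: a subgraph containing all vertices and having no cycles,
each of whose connected components contains exactly one external vertex. -/
def IsSpanningForest (T : Set G.E) : Prop :=
  G.IsForestSub T ∧ ∀ x : G.V ⊕ S, ∃! s : S, G.Reach T x (Sum.inr s)

/-- A *cycled forest*: a subgraph containing all vertices, with (number of internal
vertices) + 1 edges, each of whose connected components contains exactly one
external vertex.  Such a subgraph contains exactly one cycle. -/
def IsCycledForest (T : Set G.E) : Prop :=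
  T.ncard = Nat.card G.V + 1 ∧ ∀ x : G.V ⊕ S, ∃! s : S, G.Reach T x (Sum.inr s)

/-- A *double-hair forest*: a subgraph containing all vertices, having no cycles,
exactly one of whose connected components contains exactly the two external
vertices `j ≠ k`, all other components containing exactly one external vertex. -/
def IsDoubleHairForest (T : Set G.E) (j k : S) : Prop :=
  G.IsForestSub T ∧ j ≠ k ∧ G.Reach T (Sum.inr j) (Sum.inr k) ∧
  (∀ x : G.V ⊕ S, ∃ s : S, G.Reach T x (Sum.inr s)) ∧
  (∀ s s' : S, s ≠ s' → G.Reach T (Sum.inr s) (Sum.inr s') →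
    (s = j ∧ s' = k) ∨ (s = k ∧ s' = j))

/-- one directed step along an edge -/
def DStep (x y : G.V ⊕ S) : Prop := ∃ e : G.E, G.src e = x ∧ G.tgt e = y

/-- the graph is directed acyclic -/
def NoDirectedCycles : Prop := ∀ x : G.V ⊕ S, ¬ Relation.TransGen G.DStep x x

/-- no passing vertices (2-valent vertices with exactly one incoming and one
outgoing edge) -/
def NoPassingVertices : Prop := ∀ v : G.V, ¬ (G.indeg v = 1 ∧ G.outdeg v = 1)

/-- Defining conditions for the generators of the (undirected) hairy graph complex
`HG^S_n`: finite, connected, all internal vertices at least trivalent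
and all external legs univalent.  (Edge directions are immaterial here.) -/
def IsHG : Prop := G.IsFinite ∧ G.Connected ∧ G.IsHairy ∧ ∀ v : G.V, 3 ≤ G.valence v

/-- Defining conditions for the generators of the oriented hairy graph complex
`HOG^S_n`: finite, connected, external vertices are univalent targets, internal
vertices are at least 2-valent with at least one outgoing edge (no internal
sinks), there are no passing vertices and no directed cycles. -/
def IsHOG : Prop :=
  G.IsFinite ∧ G.Connected ∧ G.HairsAreTargets ∧ (∀ v : G.V, 2 ≤ G.valence v) ∧
    (∀ v : G.V, 1 ≤ G.outdeg v) ∧ G.NoPassingVertices ∧ G.NoDirectedCycles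

/-- Defining conditions for the generators of the (non-hairy) oriented graph
complex `OGC_n` (used with `S = Empty`): finite, connected, all vertices of
valence at least 2, no passing vertices and no directed cycles. -/
def IsOG : Prop :=
  G.IsFinite ∧ G.Connected ∧ (∀ v : G.V, 2 ≤ G.valence v) ∧
    G.NoPassingVertices ∧ G.NoDirectedCycles

def nV : ℤ := (Nat.card G.V : ℤ)
def nE : ℤ := (Nat.card G.E : ℤ)

/-- The cohomological degree of a generator of the graph complex with index `k`
(edges of degree `k-1`, vertices of degree `-k`):  `(k-1)·e − k·v`. -/
def deg (k : ℤ) : ℤ := (k - 1) * G.nE - k * G.nV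

/-- loop order = first Betti number `e − v + 1` of the connected graph
(the vertex count includes the external vertices) -/
def loopOrder : ℤ := G.nE - (G.nV + (Nat.card S : ℤ)) + 1

/-- number of sinks (vertices with no outgoing edge) -/
def nSinks : ℕ := Nat.card {v : G.V // G.outdeg v = 0}

/-- A directed graph is a *forest graph* if every internal vertex of valence at
least 3 has exactly one outgoing edge. -/
def IsForestGraph : Prop := ∀ v : G.V, 3 ≤ G.valence v → G.outdeg v = 1

/-- relabelling the hairs along a bijection -/
def relabel (σ : S ≃ T) : HGraph T where
  V := G.V
  E := G.E
  src x := Sum.map id (⇑σ) (G.src x)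
  tgt x := Sum.map id (⇑σ) (G.tgt x)

/-- Contraction of the edge `a`, merging the vertex `v₂` into `v₁` and
deleting `a`. -/
def contract (a : G.E) (v₁ v₂ : G.V) (hne : v₁ ≠ v₂) : HGraph S where
  V := {x : G.V // x ≠ v₂}
  E := {e : G.E // e ≠ a}
  src e := Sum.map
    (fun x => haveI := Classical.propDecidable (x = v₂)
      if h : x = v₂ then (⟨v₁, hne⟩ : {y : G.V // y ≠ v₂}) else ⟨x, h⟩) id (G.src e.1)
  tgt e := Sum.map
    (fun x => haveI := Classical.propDecidable (x = v₂)
      if h : x = v₂ then (⟨v₁, hne⟩ : {y : G.V // y ≠ v₂}) else ⟨x, h⟩) id (G.tgt e.1)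

/-- An edge is contractible if it connects two distinct internal vertices. -/
def ContractibleEdge (a : G.E) : Prop :=
  ∃ v₁ v₂ : G.V, G.src a = Sum.inl v₁ ∧ G.tgt a = Sum.inl v₂ ∧ v₁ ≠ v₂

def contractEdge (a : G.E) (h : G.ContractibleEdge a) : HGraph S :=
  G.contract a h.choose h.choose_spec.choose h.choose_spec.choose_spec.2.2

/-- The orientation of a forest edge towards the unique external vertex of its
connected component: the new target is the endpoint which still reaches an
external vertex after removing the edge. -/
def forestDir (T : Set G.E) (e : G.E) : (G.V ⊕ S) × (G.V ⊕ S) :=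
  haveI := Classical.propDecidable (∃ s : S, G.Reach (T \ {e}) (G.tgt e) (Sum.inr s))
  if ∃ s : S, G.Reach (T \ {e}) (G.tgt e) (Sum.inr s) then (G.src e, G.tgt e)
  else (G.tgt e, G.src e)

/-- The directed graph `Φ_T(G)` associated with a graph `G` and a spanning forest
`T`: the forest edges are directed towards the unique external vertex of their
component, and every non-forest edge is replaced by a zigzag `← • →`, i.e. a new
2-valent source vertex with two outgoing edges. -/
def forestGraph (T : Set G.E) : HGraph S where
  V := G.V ⊕ {e : G.E // e ∉ T}
  E := {e : G.E // e ∈ T} ⊕ ({e : G.E // e ∉ T} × Bool)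
  src x :=
    match x with
    | Sum.inl e => Sum.map Sum.inl id ((G.forestDir T e.1).1)
    | Sum.inr (e, _) => Sum.inl (Sum.inr e)
  tgt x :=
    match x with
    | Sum.inl e => Sum.map Sum.inl id ((G.forestDir T e.1).2)
    | Sum.inr (e, b) => Sum.map Sum.inl id (if b then G.src e.1 else G.tgt e.1)

end HGraph

/-- isomorphism of directed graphs with labelled hairs -/
structure GraphIso {S : Type} (G H : HGraph S) where
  vEquiv : G.V ≃ H.V
  eEquiv : G.E ≃ H.E
  src_eq : ∀ e, H.src (eEquiv e) = Sum.map (⇑vEquiv) id (G.src e)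
  tgt_eq : ∀ e, H.tgt (eEquiv e) = Sum.map (⇑vEquiv) id (G.tgt e)

/-- isomorphism of graphs with labelled hairs, disregarding edge directions -/
structure UIso {S : Type} (G H : HGraph S) where
  vEquiv : G.V ≃ H.V
  eEquiv : G.E ≃ H.E
  ends : ∀ e,
    (H.src (eEquiv e) = Sum.map (⇑vEquiv) id (G.src e) ∧
     H.tgt (eEquiv e) = Sum.map (⇑vEquiv) id (G.tgt e)) ∨
    (H.src (eEquiv e) = Sum.map (⇑vEquiv) id (G.tgt e) ∧
     H.tgt (eEquiv e) = Sum.map (⇑vEquiv) id (G.src e))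

/-! ### Skeleton graphs (graphs with edge types) -/

/-- The three edge types of the skeleton complex `HO^skG^S_n`: forward-directed,
backward-directed (relative to the core direction) and crossed. -/
inductive EdgeType where
  | fwd | bwd | cross
deriving DecidableEq

def EdgeType.flip : EdgeType → EdgeType
  | .fwd => .bwd
  | .bwd => .fwd
  | .cross => .cross

/-- A skeleton graph: a core graph together with an edge type on each edge. -/
structure SkGraph (S : Type) where
  core : HGraph S
  typ : core.E → EdgeType

/-- pointwise update of an edge-type assignment -/
def updTyp {E : Type*} (t : E → EdgeType) (a : E) (τ : EdgeType) : E → EdgeType :=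
  fun e => haveI := Classical.propDecidable (e = a); if e = a then τ else t e

namespace SkGraph

variable {S : Type} (X : SkGraph S)

/-- one step along the type direction of a directed (non-crossed) edge -/
def TStep (x y : X.core.V ⊕ S) : Prop :=
  ∃ e, (X.typ e = EdgeType.fwd ∧ X.core.src e = x ∧ X.core.tgt e = y) ∨
       (X.typ e = EdgeType.bwd ∧ X.core.src e = y ∧ X.core.tgt e = x)

/-- there is a directed edge whose type direction points away from `x` -/
def PointsAway (x : X.core.V ⊕ S) : Prop :=
  ∃ e, (X.typ e = EdgeType.fwd ∧ X.core.src e = x) ∨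
       (X.typ e = EdgeType.bwd ∧ X.core.tgt e = x)

/-- admissibility of an edge-type assignment: every internal vertex has an
adjacent directed edge with type direction pointing away from it, external
vertices are type-targets, and there are no type-directed cycles -/
def Admissible : Prop :=
  (∀ v : X.core.V, X.PointsAway (Sum.inl v)) ∧
  (∀ s : S, ¬ X.PointsAway (Sum.inr s)) ∧
  (∀ x : X.core.V ⊕ S, ¬ Relation.TransGen X.TStep x x)

/-- conditions for the generators of the skeleton complex `HO^skG^S_n` -/
def IsHOsk : Prop := X.core.IsHG ∧ X.Admissible

def nCross : ℤ := (Nat.card {e : X.core.E // X.typ e = EdgeType.cross} : ℤ)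
def nDir : ℤ := (Nat.card {e : X.core.E // X.typ e ≠ EdgeType.cross} : ℤ)

/-- degree in the skeleton complex with index `k`: directed edges have degree
`k−1`, crossed edges degree `k−2`, vertices degree `−k`. -/
def deg (k : ℤ) : ℤ := (k - 1) * X.nDir + (k - 2) * X.nCross - k * X.core.nV

/-- contraction of an edge of a skeleton graph -/
def contract (a : X.core.E) (v₁ v₂ : X.core.V) (hne : v₁ ≠ v₂) : SkGraph S :=
  ⟨X.core.contract a v₁ v₂ hne, fun e => X.typ e.1⟩

def contractEdge (a : X.core.E) (h : X.core.ContractibleEdge a) : SkGraph S :=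
  ⟨X.core.contractEdge a h, fun e => X.typ e.1⟩

/-- Expansion of a skeleton graph into an honest directed graph: each crossed
edge is replaced by a zigzag `← • →` and directed edges are oriented according
to their type. -/
def expand : HGraph S where
  V := X.core.V ⊕ {e : X.core.E // X.typ e = EdgeType.cross}
  E := {e : X.core.E // X.typ e ≠ EdgeType.cross} ⊕
       ({e : X.core.E // X.typ e = EdgeType.cross} × Bool)
  src x :=
    match x with
    | Sum.inl e =>
        Sum.map Sum.inl id
          (if X.typ e.1 = EdgeType.bwd then X.core.tgt e.1 else X.core.src e.1)
    | Sum.inr (e, _) => Sum.inl (Sum.inr e)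
  tgt x :=
    match x with
    | Sum.inl e =>
        Sum.map Sum.inl id
          (if X.typ e.1 = EdgeType.bwd then X.core.src e.1 else X.core.tgt e.1)
    | Sum.inr (e, b) =>
        Sum.map Sum.inl id (if b then X.core.src e.1 else X.core.tgt e.1)

end SkGraph

/-- isomorphism of skeleton graphs; reversing the core direction of an edge
exchanges forward and backward types and fixes crossed edges -/
structure SkIso {S : Type} (X Y : SkGraph S) where
  vEquiv : X.core.V ≃ Y.core.V
  eEquiv : X.core.E ≃ Y.core.E
  ends : ∀ e,
    (Y.core.src (eEquiv e) = Sum.map (⇑vEquiv) id (X.core.src e) ∧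
     Y.core.tgt (eEquiv e) = Sum.map (⇑vEquiv) id (X.core.tgt e) ∧
     Y.typ (eEquiv e) = X.typ e) ∨
    (Y.core.src (eEquiv e) = Sum.map (⇑vEquiv) id (X.core.tgt e) ∧
     Y.core.tgt (eEquiv e) = Sum.map (⇑vEquiv) id (X.core.src e) ∧
     Y.typ (eEquiv e) = (X.typ e).flip)

namespace HGraph

/-- The edge-type assignment `Φ_T(G)` of the spanning forest `T`: forest edges are
directed (by type) towards the unique external vertex of their component and all
other edges are crossed. -/
def forestTyp {S : Type} (G : HGraph S) (T : Set G.E) (e : G.E) : EdgeType :=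
  haveI := Classical.propDecidable (e ∈ T)
  haveI := Classical.propDecidable (∃ s : S, G.Reach (T \ {e}) (G.tgt e) (Sum.inr s))
  if e ∈ T then
    (if ∃ s : S, G.Reach (T \ {e}) (G.tgt e) (Sum.inr s) then EdgeType.fwd
     else EdgeType.bwd)
  else EdgeType.cross

/-- the skeleton graph `Φ_T(G)` associated with a spanning forest `T` of `G` -/
def skeleton {S : Type} (G : HGraph S) (T : Set G.E) : SkGraph S := ⟨G, G.forestTyp T⟩

end HGraph

/-! ### Graphs with unlabelled (symmetrized) hairs -/

/-- A graph together with its (unspecified) hair-labelling set; used for the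
graph complexes with (anti-)symmetrized hairs. -/
structure SGraph where
  S : Type
  G : HGraph S

/-- isomorphism of directed graphs with symmetrized hairs -/
structure SIso (A B : SGraph) where
  sEquiv : A.S ≃ B.S
  vEquiv : A.G.V ≃ B.G.V
  eEquiv : A.G.E ≃ B.G.E
  src_eq : ∀ e, B.G.src (eEquiv e) = Sum.map (⇑vEquiv) (⇑sEquiv) (A.G.src e)
  tgt_eq : ∀ e, B.G.tgt (eEquiv e) = Sum.map (⇑vEquiv) (⇑sEquiv) (A.G.tgt e)

/-- isomorphism of undirected graphs with symmetrized hairs -/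
structure USIso (A B : SGraph) where
  sEquiv : A.S ≃ B.S
  vEquiv : A.G.V ≃ B.G.V
  eEquiv : A.G.E ≃ B.G.E
  ends : ∀ e,
    (B.G.src (eEquiv e) = Sum.map (⇑vEquiv) (⇑sEquiv) (A.G.src e) ∧
     B.G.tgt (eEquiv e) = Sum.map (⇑vEquiv) (⇑sEquiv) (A.G.tgt e)) ∨
    (B.G.src (eEquiv e) = Sum.map (⇑vEquiv) (⇑sEquiv) (A.G.tgt e) ∧
     B.G.tgt (eEquiv e) = Sum.map (⇑vEquiv) (⇑sEquiv) (A.G.src e))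

namespace SGraph

/-- generators of the symmetrized hairy graph complexes `HG_{m,n}` -/
def IsHGS (X : SGraph) : Prop := X.G.IsHG ∧ Finite X.S ∧ Nonempty X.S

/-- generators of the symmetrized oriented hairy graph complexes `HOG_{m,n}` -/
def IsHOGS (X : SGraph) : Prop := X.G.IsHOG ∧ Finite X.S ∧ Nonempty X.S

/-- degree in the symmetrized hairy complex `H(O)G_{m,k}` -/
def symDeg (m k : ℤ) (X : SGraph) : ℤ := X.G.deg k - m * (Nat.card X.S : ℤ) + m

/-- degree in the dual complexes `H(O)GC_{m,k}` (vertex-splitting differential) -/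
def dualSymDeg (m k : ℤ) (X : SGraph) : ℤ := -(X.symDeg m k)

/-- Attach the hair `h` of `X` to the internal vertex `v` of `Y` (one term of the
hairy graph complex Lie bracket). -/
def attach (X Y : SGraph) (h : X.S) (v : Y.G.V) : SGraph :=
  ⟨{s : X.S // s ≠ h} ⊕ Y.S,
   { V := X.G.V ⊕ Y.G.V
     E := X.G.E ⊕ Y.G.E
     src := fun e =>
       match e with
       | Sum.inl e =>
         (match X.G.src e with
          | Sum.inl w => Sum.inl (Sum.inl w)
          | Sum.inr s =>
            haveI := Classical.propDecidable (s = h)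
            if hs : s = h then Sum.inl (Sum.inr v) else Sum.inr (Sum.inl ⟨s, hs⟩))
       | Sum.inr e =>
         (match Y.G.src e with
          | Sum.inl w => Sum.inl (Sum.inr w)
          | Sum.inr s => Sum.inr (Sum.inr s))
     tgt := fun e =>
       match e with
       | Sum.inl e =>
         (match X.G.tgt e with
          | Sum.inl w => Sum.inl (Sum.inl w)
          | Sum.inr s =>
            haveI := Classical.propDecidable (s = h)
            if hs : s = h then Sum.inl (Sum.inr v) else Sum.inr (Sum.inl ⟨s, hs⟩))
       | Sum.inr e =>
         (match Y.G.tgt e with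
          | Sum.inl w => Sum.inl (Sum.inr w)
          | Sum.inr s => Sum.inr (Sum.inr s)) }⟩

/-- Graft a new internal vertex with one edge into the vertex `v` and `k`
outgoing hairs (one term of `[m₁, −]`). -/
def graftAt (X : SGraph) (v : X.G.V) (k : ℕ) : SGraph :=
  ⟨X.S ⊕ Fin k,
   { V := X.G.V ⊕ PUnit
     E := X.G.E ⊕ (PUnit ⊕ Fin k)
     src := fun e =>
       match e with
       | Sum.inl e => Sum.map Sum.inl Sum.inl (X.G.src e)
       | Sum.inr _ => Sum.inl (Sum.inr PUnit.unit)
     tgt := fun e =>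
       match e with
       | Sum.inl e => Sum.map Sum.inl Sum.inl (X.G.tgt e)
       | Sum.inr (Sum.inl _) => Sum.inl (Sum.inl v)
       | Sum.inr (Sum.inr i) => Sum.inr (Sum.inr i) }⟩

/-- Replace the hair `h` of `X` by a new internal vertex carrying `k` outgoing
hairs (the other term of `[m₁, −]`). -/
def graftHair (X : SGraph) (h : X.S) (k : ℕ) : SGraph :=
  ⟨{s : X.S // s ≠ h} ⊕ Fin k,
   { V := X.G.V ⊕ PUnit
     E := X.G.E ⊕ Fin k
     src := fun e =>
       match e with
       | Sum.inl e =>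
         (match X.G.src e with
          | Sum.inl w => Sum.inl (Sum.inl w)
          | Sum.inr s =>
            haveI := Classical.propDecidable (s = h)
            if hs : s = h then Sum.inl (Sum.inr PUnit.unit) else Sum.inr (Sum.inl ⟨s, hs⟩))
       | Sum.inr _ => Sum.inl (Sum.inr PUnit.unit)
     tgt := fun e =>
       match e with
       | Sum.inl e =>
         (match X.G.tgt e with
          | Sum.inl w => Sum.inl (Sum.inl w)
          | Sum.inr s =>
            haveI := Classical.propDecidable (s = h)
            if hs : s = h then Sum.inl (Sum.inr PUnit.unit) else Sum.inr (Sum.inl ⟨s, hs⟩))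
       | Sum.inr i => Sum.inr (Sum.inr i) }⟩

/-- A *bad vertex*: an internal vertex sharing an edge with an external vertex
and having more than one outgoing edge. -/
def BadVertex (X : SGraph) (v : X.G.V) : Prop :=
  (∃ e : X.G.E, X.G.src e = Sum.inl v ∧ ∃ s : X.S, X.G.tgt e = Sum.inr s) ∧
  2 ≤ X.G.outdeg v

def NoBadVertices (X : SGraph) : Prop := ∀ v : X.G.V, ¬ X.BadVertex v

end SGraph

/-- the corolla: one internal vertex with `k` outgoing hairs (the terms of the
Maurer–Cartan element `m₁`) -/
def corolla (k : ℕ) : SGraph :=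
  ⟨Fin k,
   { V := PUnit, E := Fin k,
     src := fun _ => Sum.inl PUnit.unit,
     tgt := fun i => Sum.inr i }⟩

/-- the Maurer–Cartan element `m₀`: a single edge connecting two external vertices -/
def edgeGraph : SGraph :=
  ⟨Bool,
   { V := Empty, E := PUnit,
     src := fun _ => Sum.inr false,
     tgt := fun _ => Sum.inr true }⟩

namespace HGraph

/-- attach one outgoing hair to each sink of a directed graph without legs -/
def attachHairs (G₀ : HGraph Empty) : SGraph :=
  ⟨{v : G₀.V // G₀.outdeg v = 0},
   { V := G₀.V
     E := G₀.E ⊕ {v : G₀.V // G₀.outdeg v = 0}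
     src := fun e =>
       match e with
       | Sum.inl e => Sum.map id Empty.elim (G₀.src e)
       | Sum.inr v => Sum.inl v.1
     tgt := fun e =>
       match e with
       | Sum.inl e => Sum.map id Empty.elim (G₀.tgt e)
       | Sum.inr v => Sum.inr v }⟩

/-- attach `k` outgoing hairs to the vertices of a directed graph without legs,
according to the assignment `f` -/
def addHairsBy (G₀ : HGraph Empty) (k : ℕ) (f : Fin k → G₀.V) : SGraph :=
  ⟨Fin k,
   { V := G₀.V
     E := G₀.E ⊕ Fin k
     src := fun e =>
       match e with
       | Sum.inl e => Sum.map id Empty.elim (G₀.src e)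
       | Sum.inr i => Sum.inl (f i)
     tgt := fun e =>
       match e with
       | Sum.inl e => Sum.map id Empty.elim (G₀.tgt e)
       | Sum.inr i => Sum.inr i }⟩

end HGraph

/-! ### Decorated graphs (for the complexes `HGC^{S,mod}`) -/

/-- a graph each of whose internal vertices carries a genus decoration `g_x ∈ ℕ` -/
structure DGraph (S : Type) where
  G : HGraph S
  dec : G.V → ℕ

namespace DGraph

variable {S : Type} (X : DGraph S)

/-- stability: finite, connected, hairs univalent and `2·g_x + |star(x)| ≥ 3`
at every internal vertex -/
def IsStable : Prop :=
  X.G.IsFinite ∧ X.G.Connected ∧ X.G.IsHairy ∧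
    ∀ v : X.G.V, 3 ≤ 2 * X.dec v + X.G.valence v

/-- the genus: loop order plus the sum of the vertex decorations -/
def genus : ℤ := X.G.loopOrder + ∑ᶠ v : X.G.V, (X.dec v : ℤ)

/-- add a tadpole at `v` and decrease its decoration by one -/
def addTadpole (v : X.G.V) : DGraph S :=
  ⟨{ V := X.G.V
     E := X.G.E ⊕ PUnit
     src := fun e =>
       match e with
       | Sum.inl e => X.G.src e
       | Sum.inr _ => Sum.inl v
     tgt := fun e =>
       match e with
       | Sum.inl e => X.G.tgt e
       | Sum.inr _ => Sum.inl v },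
   fun w => haveI := Classical.propDecidable (w = v)
     if w = v then X.dec v - 1 else X.dec w⟩

/-- contraction of an edge of a decorated graph (decorations add up) -/
def contractEdge (a : X.G.E) (h : X.G.ContractibleEdge a) : DGraph S :=
  ⟨X.G.contractEdge a h,
   fun w => haveI := Classical.propDecidable (w.1 = h.choose)
     if w.1 = h.choose then X.dec h.choose + X.dec h.choose_spec.choose
     else X.dec w.1⟩

/-- Replace every univalent vertex of positive decoration by a tadpole at its
adjacent vertex, as prescribed by the retraction `f` (which must be the identity
on vertices of decoration `0` and send a decorated vertex to its neighbour). -/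
def collapseWith (f : X.G.V → {v : X.G.V // X.dec v = 0}) : DGraph S :=
  ⟨{ V := {v : X.G.V // X.dec v = 0}
     E := X.G.E
     src := fun e => Sum.map (fun v => f v) id (X.G.src e)
     tgt := fun e => Sum.map (fun v => f v) id (X.G.tgt e) },
   fun _ => 0⟩

/-- the exceptional graph: a single internal vertex with a tadpole and one hair -/
def IsTadpoleOneHair : Prop :=
  Nat.card X.G.V = 1 ∧ Nat.card X.G.E = 2 ∧ Nat.card S = 1 ∧
  ∃ (e : X.G.E) (v : X.G.V), X.G.src e = Sum.inl v ∧ X.G.tgt e = Sum.inl v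

end DGraph

/-- isomorphism of decorated graphs (undirected) -/
structure DIso {S : Type} (X Y : DGraph S) where
  iso : UIso X.G Y.G
  dec_eq : ∀ v, Y.dec (iso.vEquiv v) = X.dec v

/-! ### Abstract cochain complexes of `ℚ`-vector spaces and presentations -/

/-- a cochain complex of `ℚ`-vector spaces -/
structure GCx where
  X : ℤ → ModuleCat.{0} ℚ
  d : ∀ i : ℤ, X i →ₗ[ℚ] X (i + 1)
  dd : ∀ (i : ℤ) (x : X i), d (i + 1) (d i x) = 0

/-- a map of cochain complexes -/
structure GCxHom (A B : GCx) where
  f : ∀ i : ℤ, A.X i →ₗ[ℚ] B.X i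
  comm : ∀ (i : ℤ) (x : A.X i), f (i + 1) (A.d i x) = B.d i (f i x)

/-- `φ` induces an isomorphism on cohomology -/
def GCxHom.IsQuasiIso {A B : GCx} (φ : GCxHom A B) : Prop :=
  (∀ (i : ℤ) (x : B.X (i + 1)), B.d (i + 1) x = 0 →
    ∃ (y : A.X (i + 1)) (z : B.X i), A.d (i + 1) y = 0 ∧ x = φ.f (i + 1) y + B.d i z) ∧
  (∀ (i : ℤ) (y : A.X (i + 1)), A.d (i + 1) y = 0 →
    (∃ z : B.X i, φ.f (i + 1) y = B.d i z) → ∃ w : A.X i, y = A.d i w)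

/-- `φ` is an isomorphism of complexes -/
def GCxHom.IsIsoCx {A B : GCx} (φ : GCxHom A B) : Prop :=
  ∀ i : ℤ, Function.Bijective (φ.f i)

/-- the complex has vanishing cohomology -/
def GCx.Acyclic (A : GCx) : Prop :=
  ∀ (i : ℤ) (x : A.X (i + 1)), A.d (i + 1) x = 0 → ∃ y : A.X i, x = A.d i y

/-- A presentation of a graph complex: a cochain complex together with a
generator for every generating graph (an element of `ι`) in its degree. -/
structure GenPres (ι : Type*) (dg : ι → ℤ) where
  C : GCx
  gen : (i : ℤ) → {x : ι // dg x = i} → C.X i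

namespace GenPres

variable {ι : Type*} {dg : ι → ℤ}

/-- the generators span the complex -/
def Spans (P : GenPres ι dg) : Prop :=
  ∀ i : ℤ, Submodule.span ℚ (Set.range (P.gen i)) = ⊤

/-- the generator of `x`, viewed in degree `j` (zero if `x` does not have
degree `j`) -/
def el (P : GenPres ι dg) (j : ℤ) (x : ι) : P.C.X j :=
  ∑ᶠ (h : dg x = j), P.gen j ⟨x, h⟩

end GenPres

/-- For an index type which is a subtype `{x : α // cond x}` of combinatorial
graphs: the generator of the graph `a`, which is zero whenever `a` does not
satisfy the defining conditions of the complex or does not have degree `j`. -/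
def GenPres.sel {α : Type*} {cond : α → Prop} {dg : {x : α // cond x} → ℤ}
    (P : GenPres {x : α // cond x} dg) (j : ℤ) (a : α) : P.C.X j :=
  ∑ᶠ (h : cond a), P.el j ⟨a, h⟩

/-! ### Characterizations of the graph complex differentials and of the
combinatorially defined maps between graph complexes -/

/-- The differential acts by contracting edges (not adjacent to external
vertices), with signs `±1`; contractions violating the defining conditions of
the complex contribute zero (e.g. when a directed cycle is produced). -/
def IsContractionDiffL {S : Type} (cond : HGraph S → Prop) {dg}
    (P : GenPres {G : HGraph S // cond G} dg) : Prop :=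
  ∀ (j : ℤ) (G : HGraph S), cond G →
    ∃ ε : G.E → ℚ, (∀ a, ε a = 1 ∨ ε a = -1) ∧
      P.C.d j (P.sel j G) =
        ∑ᶠ (a : G.E) (h : G.ContractibleEdge a), ε a • P.sel (j + 1) (G.contractEdge a h)

/-- symmetrized-hairs version of `IsContractionDiffL` -/
def IsContractionDiffS (cond : SGraph → Prop) {dg}
    (P : GenPres {X : SGraph // cond X} dg) : Prop :=
  ∀ (j : ℤ) (X : SGraph), cond X →
    ∃ ε : X.G.E → ℚ, (∀ a, ε a = 1 ∨ ε a = -1) ∧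
      P.C.d j (P.sel j X) =
        ∑ᶠ (a : X.G.E) (h : X.G.ContractibleEdge a),
          ε a • P.sel (j + 1) (⟨X.S, X.G.contractEdge a h⟩ : SGraph)

/-- The differential of the skeleton complex with sign exponent `w`:
`d = d_C ± d_E`, where `d_C` contracts directed edges between internal vertices
and `d_E` replaces a crossed edge by `(forward) − (−1)^w (backward)`;
inadmissible results are zero. -/
def IsSkDiff {S : Type} (w : ℤ) {dg}
    (Q : GenPres {X : SkGraph S // X.IsHOsk} dg) : Prop :=
  ∀ (j : ℤ) (X : SkGraph S), X.IsHOsk →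
    ∃ ε η : X.core.E → ℚ,
      (∀ a, ε a = 1 ∨ ε a = -1) ∧ (∀ a, η a = 1 ∨ η a = -1) ∧
      Q.C.d j (Q.sel j X) =
        (∑ᶠ (a : X.core.E) (h : X.core.ContractibleEdge a)
            (_ : X.typ a ≠ EdgeType.cross),
          ε a • Q.sel (j + 1) (X.contractEdge a h))
        + ∑ᶠ (a : X.core.E) (_ : X.typ a = EdgeType.cross),
            η a • (Q.sel (j + 1) (⟨X.core, updTyp X.typ a EdgeType.fwd⟩ : SkGraph S)
              - ((-1 : ℚ) ^ w) •
                Q.sel (j + 1) (⟨X.core, updTyp X.typ a EdgeType.bwd⟩ : SkGraph S))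

/-- The dual (vertex-splitting) differential of an undirected graph complex:
`δ Γ` is a combination of graphs `H` which contract onto `Γ`. -/
def IsSplitDiffU {S : Type} (cond : HGraph S → Prop) {dg}
    (P : GenPres {G : HGraph S // cond G} dg) : Prop :=
  ∀ (j : ℤ) (G : HGraph S), cond G →
    P.C.d j (P.sel j G) ∈ Submodule.span ℚ
      {z : P.C.X (j + 1) | ∃ (H : HGraph S) (a : H.E) (h : H.ContractibleEdge a),
        Nonempty (UIso (H.contractEdge a h) G) ∧ z = P.sel (j + 1) H}

/-- directed version of `IsSplitDiffU` -/
def IsSplitDiffD {S : Type} (cond : HGraph S → Prop) {dg}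
    (P : GenPres {G : HGraph S // cond G} dg) : Prop :=
  ∀ (j : ℤ) (G : HGraph S), cond G →
    P.C.d j (P.sel j G) ∈ Submodule.span ℚ
      {z : P.C.X (j + 1) | ∃ (H : HGraph S) (a : H.E) (h : H.ContractibleEdge a),
        Nonempty (GraphIso (H.contractEdge a h) G) ∧ z = P.sel (j + 1) H}

/-- symmetrized-hairs, directed version of the vertex-splitting differential -/
def IsSplitDiffS (cond : SGraph → Prop) {dg}
    (P : GenPres {X : SGraph // cond X} dg) : Prop :=
  ∀ (j : ℤ) (X : SGraph), cond X →
    P.C.d j (P.sel j X) ∈ Submodule.span ℚ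
      {z : P.C.X (j + 1) | ∃ (Y : SGraph) (a : Y.G.E) (h : Y.G.ContractibleEdge a),
        Nonempty (SIso ⟨Y.S, Y.G.contractEdge a h⟩ X) ∧ z = P.sel (j + 1) Y}

/-- symmetrized-hairs, undirected version of the vertex-splitting differential -/
def IsSplitDiffSU (cond : SGraph → Prop) {dg}
    (P : GenPres {X : SGraph // cond X} dg) : Prop :=
  ∀ (j : ℤ) (X : SGraph), cond X →
    P.C.d j (P.sel j X) ∈ Submodule.span ℚ
      {z : P.C.X (j + 1) | ∃ (Y : SGraph) (a : Y.G.E) (h : Y.G.ContractibleEdge a),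
        Nonempty (USIso ⟨Y.S, Y.G.contractEdge a h⟩ X) ∧ z = P.sel (j + 1) Y}

/-- vertex-splitting differential for the decorated complexes `HGC^{S,mod}`:
vertex splittings together with the operation adding a tadpole at a vertex of
positive decoration while decreasing the decoration -/
def IsModSplitDiff {S : Type} (cond : DGraph S → Prop) {dg}
    (Q : GenPres {X : DGraph S // cond X} dg) : Prop :=
  ∀ (j : ℤ) (X : DGraph S), cond X →
    Q.C.d j (Q.sel j X) ∈ Submodule.span ℚ
      {z : Q.C.X (j + 1) |
        (∃ (Y : DGraph S) (a : Y.G.E) (h : Y.G.ContractibleEdge a),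
          Nonempty (DIso (Y.contractEdge a h) X) ∧ z = Q.sel (j + 1) Y) ∨
        (∃ v : X.G.V, 1 ≤ X.dec v ∧ z = Q.sel (j + 1) (X.addTadpole v))}

/-- the part `δ₀` of the vertex-splitting differential of `OGC_n` preserving the
number of sinks -/
def IsSinkSplitDiff {dg} (P : GenPres {G : HGraph Empty // G.IsOG} dg) : Prop :=
  ∀ (j : ℤ) (G : HGraph Empty), G.IsOG →
    P.C.d j (P.sel j G) ∈ Submodule.span ℚ
      {z : P.C.X (j + 1) | ∃ (H : HGraph Empty) (a : H.E) (h : H.ContractibleEdge a),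
        Nonempty (GraphIso (H.contractEdge a h) G) ∧ H.nSinks = G.nSinks ∧
        z = P.sel (j + 1) H}

/-- `F` is the dual of the spanning-forest map `Φ`: `F(Γ)` is a combination of
undirected hairy graphs `G` admitting a spanning forest whose forest expansion
is isomorphic to `Γ`; in particular `F` kills all non-forest graphs. -/
def IsDualForestMapL {S : Type} {dgQ dgP}
    (Q : GenPres {G : HGraph S // G.IsHOG} dgQ)
    (P : GenPres {G : HGraph S // G.IsHG} dgP)
    (F : GCxHom Q.C P.C) : Prop :=
  ∀ (j : ℤ) (Γ : HGraph S), Γ.IsHOG →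
    F.f j (Q.sel j Γ) ∈ Submodule.span ℚ
      {y : P.C.X j | ∃ (G : HGraph S) (_ : G.IsHG) (T : Set G.E),
        G.IsSpanningForest T ∧ Nonempty (GraphIso (G.forestGraph T) Γ) ∧
        y = P.sel j G}

/-- symmetrized-hairs version of `IsDualForestMapL` -/
def IsDualForestMapS {dgQ dgP}
    (Q : GenPres {X : SGraph // X.IsHOGS} dgQ)
    (P : GenPres {X : SGraph // X.IsHGS} dgP)
    (F : GCxHom Q.C P.C) : Prop :=
  ∀ (j : ℤ) (Γ : SGraph), Γ.IsHOGS →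
    F.f j (Q.sel j Γ) ∈ Submodule.span ℚ
      {y : P.C.X j | ∃ (X : SGraph) (_ : X.IsHGS) (T : Set X.G.E),
        X.G.IsSpanningForest T ∧
        Nonempty (SIso ⟨X.S, X.G.forestGraph T⟩ Γ) ∧ y = P.sel j X}

/-- the hairy graph complex Lie bracket: sum over all ways of attaching a hair
of one graph to an internal vertex of the other graph -/
def IsAttachBracket (cond : SGraph → Prop) {dg}
    (P : GenPres {X : SGraph // cond X} dg)
    (br : ∀ i j : ℤ, P.C.X i →ₗ[ℚ] P.C.X j →ₗ[ℚ] P.C.X (i + j)) : Prop :=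
  ∀ (i j : ℤ) (X Y : SGraph), cond X → cond Y →
    br i j (P.sel i X) (P.sel j Y) ∈ Submodule.span ℚ
      {z : P.C.X (i + j) |
        (∃ (h : X.S) (v : Y.G.V), z = P.sel (i + j) (X.attach Y h v)) ∨
        (∃ (h : Y.S) (v : X.G.V), z = P.sel (i + j) (Y.attach X h v))}

/-!
A finite forest in which every vertex reaches exactly one vertex of a root set `R` has
exactly `|Rᶜ|` edges: deleting an edge cuts exactly one of its endpoints off the roots, and
that endpoint becomes a new root of the smaller forest. With the hairs as roots, a spanning
forest therefore has `v` edges, so adding an edge with both ends in one of its trees gives a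
cycled forest. Conversely, if deleting an edge `a` of a cycled forest `ρ` leaves a forest,
every vertex still reaches a hair: otherwise an endpoint of `a` would become a new root and
the forest `ρ \ {a}` would have `v - 1` edges instead of `v`.
-/

theorem Set.compl_insert {α : Type*} (a : α) (s : Set α) : (insert a s)ᶜ = sᶜ \ {a} := by
  ext; simp [and_comm]

namespace HGraph

variable {S : Type}

structure IsRootedBy (G : HGraph S) (T : Set G.E) (R : Set (G.V ⊕ S)) : Prop where
  exists_reach : ∀ x, ∃ r ∈ R, G.Reach T x r
  eq_of_reach : ∀ {x r r'}, r ∈ R → r' ∈ R → G.Reach T x r → G.Reach T x r' → r = r'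

variable {G : HGraph S} {T T' : Set G.E} {R : Set (G.V ⊕ S)} {e : G.E} {x y c : G.V ⊕ S}

theorem Adj.symm (h : G.Adj T x y) : G.Adj T y x :=
  let ⟨e, he, h⟩ := h
  ⟨e, he, h.symm⟩

theorem Adj.mono (hT : T ⊆ T') (h : G.Adj T x y) : G.Adj T' x y :=
  let ⟨e, he, h⟩ := h
  ⟨e, hT he, h⟩

theorem Reach.trans {z : G.V ⊕ S} (hxy : G.Reach T x y) (hyz : G.Reach T y z) :
    G.Reach T x z :=
  Relation.ReflTransGen.trans hxy hyz

theorem Reach.symm (h : G.Reach T x y) : G.Reach T y x := by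
  induction h with
  | refl => exact .refl
  | tail _ hadj ih => exact ih.head hadj.symm

theorem Reach.mono (hT : T ⊆ T') (h : G.Reach T x y) : G.Reach T' x y :=
  Relation.ReflTransGen.mono (fun _ _ => Adj.mono hT) _ _ h

theorem reach_src_tgt (he : e ∈ T) : G.Reach T (G.src e) (G.tgt e) :=
  .single ⟨e, he, .inl ⟨rfl, rfl⟩⟩

theorem eq_of_reach_empty (h : G.Reach ∅ x y) : x = y := by
  induction h with
  | refl => rfl
  | tail _ hadj => exact hadj.choose_spec.1.elim

theorem Reach.cases_sdiff_singleton (h : G.Reach T x y) (e : G.E) :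
    G.Reach (T \ {e}) x y ∨
      (G.Reach (T \ {e}) x (G.src e) ∧ G.Reach (T \ {e}) (G.tgt e) y) ∨
      (G.Reach (T \ {e}) x (G.tgt e) ∧ G.Reach (T \ {e}) (G.src e) y) := by
  induction h with
  | refl => exact .inl .refl
  | @tail b d _ hadj ih =>
    obtain ⟨e', he', hends⟩ := hadj
    by_cases hee' : e' = e
    · subst hee'
      rcases hends with ⟨rfl, rfl⟩ | ⟨rfl, rfl⟩ <;>
        rcases ih with h | ⟨h₁, h₂⟩ | ⟨h₁, h₂⟩ <;> tauto
    · have hstep : G.Adj (T \ {e}) b d := ⟨e', ⟨he', hee'⟩, hends⟩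
      rcases ih with h | ⟨h₁, h₂⟩ | ⟨h₁, h₂⟩
      · exact .inl (h.tail hstep)
      · exact .inr (.inl ⟨h₁, h₂.tail hstep⟩)
      · exact .inr (.inr ⟨h₁, h₂.tail hstep⟩)

theorem Reach.of_insert (h : G.Reach (insert e T) x y)
    (hst : G.Reach T (G.src e) (G.tgt e)) : G.Reach T x y := by
  have hsub : insert e T \ {e} ⊆ T := Set.sdiff_singleton_subset_iff.2 subset_rfl
  rcases h.cases_sdiff_singleton e with h | ⟨h₁, h₂⟩ | ⟨h₁, h₂⟩
  · exact h.mono hsub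
  · exact ((h₁.mono hsub).trans hst).trans (h₂.mono hsub)
  · exact ((h₁.mono hsub).trans hst.symm).trans (h₂.mono hsub)

theorem IsForestSub.mono (h : G.IsForestSub T) (hT : T' ⊆ T) : G.IsForestSub T' :=
  fun e he hcycle => h e (hT he) (hcycle.mono (Set.sdiff_subset_sdiff_left hT))

theorem isRootedBy_range_inr_iff :
    G.IsRootedBy T (Set.range Sum.inr) ↔ ∀ x, ∃! s : S, G.Reach T x (Sum.inr s) := by
  refine ⟨fun h x => ?_, fun h => ⟨fun x => ?_, ?_⟩⟩
  · obtain ⟨_, ⟨s, rfl⟩, hs⟩ := h.exists_reach x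
    exact ⟨s, hs, fun s' hs' => Sum.inr_injective (h.eq_of_reach ⟨s', rfl⟩ ⟨s, rfl⟩ hs' hs)⟩
  · obtain ⟨s, hs, -⟩ := h x
    exact ⟨_, ⟨s, rfl⟩, hs⟩
  · rintro x _ _ ⟨s, rfl⟩ ⟨s', rfl⟩ hs hs'
    rw [(h x).unique hs hs']

namespace IsRootedBy

theorem reach_of_subset (hT' : G.IsRootedBy T' R) (hT : G.IsRootedBy T R) (hsub : T' ⊆ T)
    (h : G.Reach T x y) : G.Reach T' x y := by
  obtain ⟨r, hr, hxr⟩ := hT'.exists_reach x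
  obtain ⟨r', hr', hyr'⟩ := hT'.exists_reach y
  obtain rfl : r = r' := hT.eq_of_reach hr hr' (hxr.mono hsub) (h.trans (hyr'.mono hsub))
  exact hxr.trans hyr'.symm

theorem sdiff_singleton (hT : G.IsRootedBy T R) (hc : c = G.src e ∨ c = G.tgt e)
    (hcut : ∀ r ∈ R, ¬ G.Reach (T \ {e}) c r) : G.IsRootedBy (T \ {e}) (insert c R) where
  exists_reach x := by
    obtain ⟨r, hr, hxr⟩ := hT.exists_reach x
    rcases hxr.cases_sdiff_singleton e with h | ⟨hxs, htr⟩ | ⟨hxt, hsr⟩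
    · exact ⟨r, .inr hr, h⟩
    · rcases hc with rfl | rfl
      · exact ⟨_, .inl rfl, hxs⟩
      · exact (hcut r hr htr).elim
    · rcases hc with rfl | rfl
      · exact (hcut r hr hsr).elim
      · exact ⟨_, .inl rfl, hxt⟩
  eq_of_reach hr hr' hxr hxr' := by
    rcases hr with rfl | hr <;> rcases hr' with rfl | hr'
    · rfl
    · exact (hcut _ hr' (hxr.symm.trans hxr')).elim
    · exact (hcut _ hr (hxr'.symm.trans hxr)).elim
    · exact hT.eq_of_reach hr hr' (hxr.mono Set.sdiff_subset) (hxr'.mono Set.sdiff_subset)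

theorem exists_cut_endpoint (hT : G.IsRootedBy T R) (hf : G.IsForestSub T) (he : e ∈ T) :
    ∃ c, (c = G.src e ∨ c = G.tgt e) ∧ ∀ r ∈ R, ¬ G.Reach (T \ {e}) c r := by
  by_contra! h
  obtain ⟨r, hr, hsr⟩ := h _ (.inl rfl)
  obtain ⟨r', hr', htr'⟩ := h _ (.inr rfl)
  obtain rfl : r = r' := hT.eq_of_reach hr hr' (hsr.mono Set.sdiff_subset)
    ((reach_src_tgt he).trans (htr'.mono Set.sdiff_subset))
  exact hf e he (hsr.trans htr'.symm)

theorem insert (hT : G.IsRootedBy T R) (hst : G.Reach T (G.src e) (G.tgt e)) :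
    G.IsRootedBy (insert e T) R where
  exists_reach x :=
    let ⟨r, hr, hxr⟩ := hT.exists_reach x
    ⟨r, hr, hxr.mono (Set.subset_insert e T)⟩
  eq_of_reach hr hr' hxr hxr' := hT.eq_of_reach hr hr' (hxr.of_insert hst) (hxr'.of_insert hst)

end IsRootedBy

theorem IsForestSub.encard_eq_encard_compl (hT : T.Finite) (hf : G.IsForestSub T)
    (hR : G.IsRootedBy T R) : T.encard = Rᶜ.encard := by
  induction T, hT using Set.Finite.induction_on generalizing R with
  | empty =>
    have hR_univ : R = Set.univ := Set.eq_univ_of_forall fun x =>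
      let ⟨_, hr, hxr⟩ := hR.exists_reach x
      eq_of_reach_empty hxr ▸ hr
    simp [hR_univ]
  | @insert e T heT _ ih =>
    obtain ⟨c, hc, hcut⟩ := hR.exists_cut_endpoint hf (Set.mem_insert e T)
    have hR' := hR.sdiff_singleton hc hcut
    rw [Set.insert_sdiff_self_of_notMem heT] at hR' hcut
    have hcR : c ∈ Rᶜ := fun hcR => hcut c hcR .refl
    rw [Set.encard_insert_of_notMem heT, ih (hf.mono (Set.subset_insert e T)) hR',
      Set.compl_insert, Set.encard_sdiff_singleton_add_one hcR]

/-- Otherwise an endpoint of `e` becomes a new root, and counting gives `T.encard = Rᶜ.encard`. -/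
theorem IsRootedBy.sdiff_singleton_of_encard_ne (hT : G.IsRootedBy T R) (hfin : T.Finite)
    (he : e ∈ T) (hf : G.IsForestSub (T \ {e})) (hcard : T.encard ≠ Rᶜ.encard) :
    G.IsRootedBy (T \ {e}) R := by
  refine ⟨fun x => ?_, fun hr hr' hxr hxr' =>
    hT.eq_of_reach hr hr' (hxr.mono Set.sdiff_subset) (hxr'.mono Set.sdiff_subset)⟩
  by_contra! hx
  obtain ⟨c, hc, hcut⟩ :
      ∃ c, (c = G.src e ∨ c = G.tgt e) ∧ ∀ r ∈ R, ¬ G.Reach (T \ {e}) c r := by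
    obtain ⟨r, hr, hxr⟩ := hT.exists_reach x
    rcases hxr.cases_sdiff_singleton e with h | ⟨hxs, -⟩ | ⟨hxt, -⟩
    · exact (hx r hr h).elim
    · exact ⟨_, .inl rfl, fun r hr h => hx r hr (hxs.trans h)⟩
    · exact ⟨_, .inr rfl, fun r hr h => hx r hr (hxt.trans h)⟩
  have hcR : c ∈ Rᶜ := fun hcR => hcut c hcR .refl
  apply hcard
  rw [← Set.encard_sdiff_singleton_add_one he,
    hf.encard_eq_encard_compl (hfin.subset Set.sdiff_subset) (hT.sdiff_singleton hc hcut),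
    Set.compl_insert, Set.encard_sdiff_singleton_add_one hcR]

variable {ρ τ : Set G.E} {a : G.E}

theorem IsSpanningForest.ncard_eq (hτ : G.IsSpanningForest τ) (hfin : τ.Finite) :
    τ.ncard = Nat.card G.V := by
  rw [Set.ncard_def, hτ.1.encard_eq_encard_compl hfin (isRootedBy_range_inr_iff.2 hτ.2),
    ← Set.ncard_def, Set.compl_range_inr, Set.ncard_range_of_injective Sum.inl_injective]

theorem IsSpanningForest.isCycledForest_insert [Finite G.E] (hτ : G.IsSpanningForest τ)
    (ha : a ∉ τ) (hst : G.Reach τ (G.src a) (G.tgt a)) : G.IsCycledForest (insert a τ) :=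
  ⟨by rw [Set.ncard_insert_of_notMem ha, hτ.ncard_eq (Set.toFinite τ)],
    isRootedBy_range_inr_iff.1 ((isRootedBy_range_inr_iff.2 hτ.2).insert hst)⟩

theorem IsCycledForest.isRootedBy_sdiff_singleton (hρ : G.IsCycledForest ρ) (ha : a ∈ ρ)
    (hf : G.IsForestSub (ρ \ {a})) : G.IsRootedBy (ρ \ {a}) (Set.range Sum.inr) := by
  have hfin : ρ.Finite := Set.finite_of_ncard_ne_zero (by rw [hρ.1]; omega)
  refine (isRootedBy_range_inr_iff.2 hρ.2).sdiff_singleton_of_encard_ne hfin ha hf fun h => ?_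
  have hncard := congrArg ENat.toNat h
  rw [← Set.ncard_def, ← Set.ncard_def, hρ.1, Set.compl_range_inr,
    Set.ncard_range_of_injective Sum.inl_injective] at hncard
  omega

theorem IsCycledForest.isSpanningForest_sdiff_singleton (hρ : G.IsCycledForest ρ) (ha : a ∈ ρ)
    (hf : G.IsForestSub (ρ \ {a})) : G.IsSpanningForest (ρ \ {a}) :=
  ⟨hf, isRootedBy_range_inr_iff.1 (hρ.isRootedBy_sdiff_singleton ha hf)⟩

theorem IsCycledForest.reach_sdiff_singleton (hρ : G.IsCycledForest ρ) (ha : a ∈ ρ)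
    (hf : G.IsForestSub (ρ \ {a})) : G.Reach (ρ \ {a}) (G.src a) (G.tgt a) :=
  (hρ.isRootedBy_sdiff_singleton ha hf).reach_of_subset (isRootedBy_range_inr_iff.2 hρ.2)
    Set.sdiff_subset (reach_src_tgt ha)

end HGraph

theorem statement_9_general (S : Type) (G : HGraph S)
    (hfin : G.IsFinite) :
    ∃ f : {p : Set G.E × G.E //
          G.IsCycledForest p.1 ∧ p.2 ∈ p.1 ∧ G.IsForestSub (p.1 \ {p.2})} ≃
        {p : Set G.E × G.E //
          G.IsSpanningForest p.1 ∧ p.2 ∉ p.1 ∧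
            G.Reach p.1 (G.src p.2) (G.tgt p.2)},
      ∀ p, ((f p : {p : Set G.E × G.E //
            G.IsSpanningForest p.1 ∧ p.2 ∉ p.1 ∧
              G.Reach p.1 (G.src p.2) (G.tgt p.2)}) : Set G.E × G.E)
          = ((p : Set G.E × G.E).1 \ {(p : Set G.E × G.E).2},
             (p : Set G.E × G.E).2) := by
  have := hfin.2
  refine ⟨⟨fun ⟨(ρ, a), hρ, ha, hf⟩ => ⟨(ρ \ {a}, a),
      hρ.isSpanningForest_sdiff_singleton ha hf, fun h => h.2 rfl,
      hρ.reach_sdiff_singleton ha hf⟩,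
    fun ⟨(τ, a), hτ, ha, hst⟩ => ⟨(insert a τ, a), hτ.isCycledForest_insert ha hst,
      Set.mem_insert a τ, by rw [Set.insert_sdiff_self_of_notMem ha]; exact hτ.1⟩,
    fun ⟨(_, _), _, ha, _⟩ => Subtype.ext (Prod.ext (Set.insert_sdiff_singleton.trans
      (Set.insert_eq_of_mem ha)) rfl),
    fun ⟨(_, _), _, ha, _⟩ => Subtype.ext (Prod.ext (Set.insert_sdiff_self_of_notMem ha) rfl)⟩,
    fun ⟨(_, _), _, _, _⟩ => rfl⟩

theorem statement_9 (S : Type) [Finite S] (G : HGraph S)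
    (hfin : G.IsFinite) (hconn : G.Connected) (hhairy : G.IsHairy) :
    ∃ f : {p : Set G.E × G.E //
          G.IsCycledForest p.1 ∧ p.2 ∈ p.1 ∧ G.IsForestSub (p.1 \ {p.2})} ≃
        {p : Set G.E × G.E //
          G.IsSpanningForest p.1 ∧ p.2 ∉ p.1 ∧
            G.Reach p.1 (G.src p.2) (G.tgt p.2)},
      ∀ p, ((f p : {p : Set G.E × G.E //
            G.IsSpanningForest p.1 ∧ p.2 ∉ p.1 ∧
              G.Reach p.1 (G.src p.2) (G.tgt p.2)}) : Set G.E × G.E)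
          = ((p : Set G.E × G.E).1 \ {(p : Set G.E × G.E).2},
             (p : Set G.E × G.E).2) :=
  statement_9_general S G hfin

end
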